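/- arXiv:1902.06599 — 3 statements merged into one kernel-verified Lean document; each statement's English description precedes it below -/
import Mathlib

section
/- Let P be a simple histogram, let v ∈ V(P) be a vertex that is r-reflex or the left base vertex, and let u ∈ [v, r(v)] be a vertex distinct from v and from r(v). Then I(u) ⊆ [v, r(v)]. -/
open Classical Set

noncomputable section

/-- A *double histogram*: an `x`-monotone orthogonal polygon in general position whose
base line lies on the `x`-axis.  It is described by its bottom columns (over the
breakpoints `xs` with depths `d < 0`) and its top columns (over the breakpoints `ys`
with heights `h > 0`).  A *simple histogram* is the special case `n = 1`, where the
upper boundary is the single (base) edge at height `h 0`. -/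
structure DoubleHistogram where
  m : ℕ
  n : ℕ
  hm : 0 < m
  hn : 0 < n
  xs : Fin (m + 1) → ℝ
  ys : Fin (n + 1) → ℝ
  d : Fin m → ℝ
  h : Fin n → ℝ
  xs_mono : StrictMono xs
  ys_mono : StrictMono ys
  left_eq : ys 0 = xs 0
  right_eq : ys (Fin.last n) = xs (Fin.last m)
  d_neg : ∀ i, d i < 0
  h_pos : ∀ j, 0 < h j
  /-- general position: no three vertices on a horizontal line -/
  d_inj : Function.Injective d
  h_inj : Function.Injective h
  /-- general position: no three vertices on a vertical line -/
  gen_pos : ∀ (i : Fin (m + 1)) (j : Fin (n + 1)), xs i = ys j →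
      (i = 0 ∧ j = 0) ∨ (i = Fin.last m ∧ j = Fin.last n)

/-- Among the reals in `A`, the one of minimum absolute value
(i.e. "closest to the base line"). -/
def closestToBase (A : Set ℝ) : ℝ :=
  sSup {y | y ∈ A ∧ ∀ y' ∈ A, |y| ≤ |y'|}

/-- The leftmost point of `S` among those minimizing the distance `|y|` to the base line. -/
def leftmostLowest (S : Set (ℝ × ℝ)) : ℝ × ℝ :=
  (sInf {x | ∃ y, (x, y) ∈ S ∧ ∀ q ∈ S, |y| ≤ |q.2|},
    closestToBase {y | (sInf {x | ∃ y', (x, y') ∈ S ∧ ∀ q ∈ S, |y'| ≤ |q.2|}, y) ∈ S})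

namespace DoubleHistogram

variable (H : DoubleHistogram)

/-- The polygon `P`, as a closed region of the plane. -/
def region : Set (ℝ × ℝ) :=
  (⋃ i : Fin H.m, Icc (H.xs i.castSucc) (H.xs i.succ) ×ˢ Icc (H.d i) 0) ∪
    ⋃ j : Fin H.n, Icc (H.ys j.castSucc) (H.ys j.succ) ×ˢ Icc 0 (H.h j)

/-- The vertex set `V(P)`. -/
def verts : Set (ℝ × ℝ) :=
  (⋃ i : Fin H.m,
      ({(H.xs i.castSucc, H.d i), (H.xs i.succ, H.d i)} : Set (ℝ × ℝ))) ∪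
    ⋃ j : Fin H.n,
      ({(H.ys j.castSucc, H.h j), (H.ys j.succ, H.h j)} : Set (ℝ × ℝ))

/-- `p` and `q` are co-visible: the axis-parallel rectangle they span lies in `P`. -/
def covisible (p q : ℝ × ℝ) : Prop :=
  Icc (min p.1 q.1) (max p.1 q.1) ×ˢ Icc (min p.2 q.2) (max p.2 q.2) ⊆ H.region

lemma covisible_symm {p q : ℝ × ℝ} (hpq : H.covisible p q) : H.covisible q p := by
  unfold covisible at hpq ⊢
  rwa [min_comm q.1 p.1, max_comm q.1 p.1, min_comm q.2 p.2, max_comm q.2 p.2]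

/-- The (unweighted) visibility graph `G(P)` on the vertices of `P`. -/
def visGraph : SimpleGraph ↥H.verts where
  Adj u v := u ≠ v ∧ H.covisible ↑u ↑v
  symm := ⟨fun _ _ hu => ⟨hu.1.symm, H.covisible_symm hu.2⟩⟩
  loopless := ⟨fun _ hu => hu.1 rfl⟩

/-- The closed neighborhood `N(v)`: `v` together with the vertices it sees. -/
def Nbr (v : ℝ × ℝ) : Set (ℝ × ℝ) :=
  {w | w ∈ H.verts ∧ (w = v ∨ H.covisible v w)}

/-- The abscissa where the leftward horizontal ray from `v` hits the boundary of `P`. -/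
def lhit (v : ℝ × ℝ) : ℝ :=
  sInf {x | x ≤ v.1 ∧ Icc x v.1 ×ˢ ({v.2} : Set ℝ) ⊆ H.region}

/-- The abscissa where the rightward horizontal ray from `v` hits the boundary of `P`. -/
def rhit (v : ℝ × ℝ) : ℝ :=
  sSup {x | v.1 ≤ x ∧ Icc v.1 x ×ˢ ({v.2} : Set ℝ) ⊆ H.region}

/-- The `y`-coordinate, among the vertices of `P` with abscissa `x` lying on the same side
of the base line as `side`, of the one closest to the base line (i.e. the endpoint of the
vertical edge at `x` closer to the base line). -/
def nearY (x : ℝ) (side : ℝ) : ℝ :=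
  if side < 0 then sSup {y | y < 0 ∧ (x, y) ∈ H.verts}
  else sInf {y | 0 < y ∧ (x, y) ∈ H.verts}

/-- The left point `ℓ(v)` (double-histogram version): if the leftward ray from `v` hits the
left boundary then the hit point, otherwise the endpoint of the hit vertical edge closer to
the base line. -/
def lpt (v : ℝ × ℝ) : ℝ × ℝ :=
  if H.lhit v = H.xs 0 then (H.xs 0, v.2) else (H.lhit v, H.nearY (H.lhit v) v.2)

/-- The right point `r(v)` (double-histogram version). -/
def rpt (v : ℝ × ℝ) : ℝ × ℝ :=
  if H.rhit v = H.xs (Fin.last H.m) then (H.xs (Fin.last H.m), v.2)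
  else (H.rhit v, H.nearY (H.rhit v) v.2)

/-- The left base vertex (for a simple histogram, i.e. `n = 1`). -/
def baseL : ℝ × ℝ := (H.xs 0, H.h ⟨0, H.hn⟩)

/-- The right base vertex (for a simple histogram, i.e. `n = 1`). -/
def baseR : ℝ × ℝ := (H.xs (Fin.last H.m), H.h ⟨0, H.hn⟩)

/-- The left point `ℓ(v)` (simple-histogram version): if the leftward ray from `v` hits the
left boundary then the left base vertex, otherwise the endpoint of the hit vertical edge
closer to the base edge. -/
def lptS (v : ℝ × ℝ) : ℝ × ℝ :=
  if H.lhit v = H.xs 0 then H.baseL else (H.lhit v, H.nearY (H.lhit v) v.2)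

/-- The right point `r(v)` (simple-histogram version). -/
def rptS (v : ℝ × ℝ) : ℝ × ℝ :=
  if H.rhit v = H.xs (Fin.last H.m) then H.baseR
  else (H.rhit v, H.nearY (H.rhit v) v.2)

/-- The interval `[p, q]`: all vertices of `P` between `p` and `q`. -/
def ivl (p q : ℝ × ℝ) : Set (ℝ × ℝ) :=
  {u | u ∈ H.verts ∧ p.1 ≤ u.1 ∧ u.1 ≤ q.1}

/-- The interval `I(v) = [ℓ(v), r(v)]` of a vertex (double-histogram version). -/
def Iv (v : ℝ × ℝ) : Set (ℝ × ℝ) := H.ivl (H.lpt v) (H.rpt v)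

/-- The interval `I(v) = [ℓ(v), r(v)]` of a vertex (simple-histogram version). -/
def IvS (v : ℝ × ℝ) : Set (ℝ × ℝ) := H.ivl (H.lptS v) (H.rptS v)

/-- The corresponding vertex `cv(v)`: the unique other vertex sharing a horizontal edge
(equivalently, by general position, the `y`-coordinate) with `v`. -/
def cv (v : ℝ × ℝ) : ℝ × ℝ :=
  (sSup {x | (x, v.2) ∈ H.verts ∧ x ≠ v.1}, v.2)

/-- `v` is a left vertex: the left endpoint of its horizontal edge. -/
def IsLeftVert (v : ℝ × ℝ) : Prop :=
  (∃ i : Fin H.m, v = (H.xs i.castSucc, H.d i)) ∨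
    ∃ j : Fin H.n, v = (H.ys j.castSucc, H.h j)

/-- `v` is a right vertex: the right endpoint of its horizontal edge. -/
def IsRightVert (v : ℝ × ℝ) : Prop :=
  (∃ i : Fin H.m, v = (H.xs i.succ, H.d i)) ∨
    ∃ j : Fin H.n, v = (H.ys j.succ, H.h j)

/-- `v` is an `ℓ`-reflex vertex (a left vertex with interior angle `3π/2`). -/
def IsLReflex (v : ℝ × ℝ) : Prop :=
  (∃ i : Fin H.m, ∃ _ : 0 < (i : ℕ),
      v = (H.xs i.castSucc, H.d i) ∧
        H.d ⟨(i : ℕ) - 1, lt_of_le_of_lt (Nat.sub_le _ _) i.isLt⟩ < H.d i) ∨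
    ∃ j : Fin H.n, ∃ _ : 0 < (j : ℕ),
      v = (H.ys j.castSucc, H.h j) ∧
        H.h j < H.h ⟨(j : ℕ) - 1, lt_of_le_of_lt (Nat.sub_le _ _) j.isLt⟩

/-- `v` is an `r`-reflex vertex (a right vertex with interior angle `3π/2`). -/
def IsRReflex (v : ℝ × ℝ) : Prop :=
  (∃ i : Fin H.m, ∃ hi : (i : ℕ) + 1 < H.m,
      v = (H.xs i.succ, H.d i) ∧ H.d ⟨(i : ℕ) + 1, hi⟩ < H.d i) ∨
    ∃ j : Fin H.n, ∃ hj : (j : ℕ) + 1 < H.n,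
      v = (H.ys j.succ, H.h j) ∧ H.h j < H.h ⟨(j : ℕ) + 1, hj⟩

/-- `v` is a reflex vertex. -/
def IsReflex (v : ℝ × ℝ) : Prop := H.IsLReflex v ∨ H.IsRReflex v

/-- The near dominator `nd(s,t)`: for `t` strictly right of `s`, the rightmost vertex of
`N(s)` to the left of `t`, ties broken towards the base line (symmetric otherwise). -/
def nd (s t : ℝ × ℝ) : ℝ × ℝ :=
  if s.1 < t.1 then
    let nx := sSup {x | (∃ y, (x, y) ∈ H.Nbr s) ∧ x ≤ t.1}
    (nx, closestToBase {y | (nx, y) ∈ H.Nbr s})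
  else
    let nx := sInf {x | (∃ y, (x, y) ∈ H.Nbr s) ∧ t.1 ≤ x}
    (nx, closestToBase {y | (nx, y) ∈ H.Nbr s})

/-- The far dominator `fd(s,t)`: for `t` strictly right of `s`, the leftmost vertex of
`N(s)` to the right of `t`, ties broken towards the base line; if there is no such vertex,
the point `r(s)` (symmetric otherwise). -/
def fd (s t : ℝ × ℝ) : ℝ × ℝ :=
  if s.1 < t.1 then
    if ∃ w ∈ H.Nbr s, t.1 ≤ w.1 then
      let nx := sInf {x | (∃ y, (x, y) ∈ H.Nbr s) ∧ t.1 ≤ x}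
      (nx, closestToBase {y | (nx, y) ∈ H.Nbr s})
    else H.rpt s
  else
    if ∃ w ∈ H.Nbr s, w.1 ≤ t.1 then
      let nx := sSup {x | (∃ y, (x, y) ∈ H.Nbr s) ∧ x ≤ t.1}
      (nx, closestToBase {y | (nx, y) ∈ H.Nbr s})
    else H.lpt s

/-- The sequence `a^i(s)`: `a^0(s) = s`, and `a^i(s)` is the leftmost vertex of
`A^i(s) = {v ∈ N(s) : ℓ(v)_x < ℓ(a^{i-1}(s))_x}` (ties towards the base line),
or `a^{i-1}(s)` if `A^i(s)` is empty. -/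
def aSeq (s : ℝ × ℝ) : ℕ → ℝ × ℝ := fun k =>
  Nat.rec (motive := fun _ => ℝ × ℝ) s
    (fun _ prev =>
      let A : Set (ℝ × ℝ) := {v | v ∈ H.Nbr s ∧ (H.lpt v).1 < (H.lpt prev).1}
      if A = ∅ then prev
      else
        let ax := sInf {x | ∃ y, (x, y) ∈ A}
        (ax, closestToBase {y | (ax, y) ∈ A}))
    k

/-- The sequence `b^i(s)`: `b^0(s) = s`, and `b^i(s)` is the rightmost vertex of
`B^i(s) = {v ∈ N(s) : r(v)_x > r(b^{i-1}(s))_x}` (ties towards the base line),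
or `b^{i-1}(s)` if `B^i(s)` is empty. -/
def bSeq (s : ℝ × ℝ) : ℕ → ℝ × ℝ := fun k =>
  Nat.rec (motive := fun _ => ℝ × ℝ) s
    (fun _ prev =>
      let B : Set (ℝ × ℝ) := {v | v ∈ H.Nbr s ∧ (H.rpt prev).1 < (H.rpt v).1}
      if B = ∅ then prev
      else
        let bx := sSup {x | ∃ y, (x, y) ∈ B}
        (bx, closestToBase {y | (bx, y) ∈ B}))
    k

/-- The pair of the `k`-th bottom dominator `bd^k(s)` and `k`-th top dominator `td^k(s)`:
`bd^0(s) = td^0(s) = s`; for `k > 0`, with `I^k(s) = I(bd^{k-1}(s)) ∪ I(td^{k-1}(s))`,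
`bd^k(s)` is the leftmost vertex of `I^k(s)⁻` minimizing the distance to the base line,
and `td^k(s)` the leftmost vertex of `I^k(s)⁺` minimizing the distance to the base line;
if one of the two sets is empty, the corresponding dominator equals the other one. -/
def bdtd (s : ℝ × ℝ) : ℕ → (ℝ × ℝ) × (ℝ × ℝ) := fun k =>
  Nat.rec (motive := fun _ => (ℝ × ℝ) × (ℝ × ℝ)) (s, s)
    (fun _ p =>
      let J : Set (ℝ × ℝ) := H.Iv p.1 ∪ H.Iv p.2
      let Jm : Set (ℝ × ℝ) := {v | v ∈ J ∧ v.2 < 0}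
      let Jp : Set (ℝ × ℝ) := {v | v ∈ J ∧ 0 < v.2}
      if Jm = ∅ then (leftmostLowest Jp, leftmostLowest Jp)
      else if Jp = ∅ then (leftmostLowest Jm, leftmostLowest Jm)
      else (leftmostLowest Jm, leftmostLowest Jp))
    k

/-- The `k`-th interval `I^k(s)`: `I^0(s) = {s}` and
`I^{k+1}(s) = I(bd^k(s)) ∪ I(td^k(s))`. -/
def Ipow (s : ℝ × ℝ) : ℕ → Set (ℝ × ℝ) := fun k =>
  Nat.rec (motive := fun _ => Set (ℝ × ℝ)) {s}
    (fun k _ => H.Iv (H.bdtd s k).1 ∪ H.Iv (H.bdtd s k).2) k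

/-- `w` lies on a shortest path from `s` to `t` in the visibility graph. -/
def OnShortestPath (s t w : ↥H.verts) : Prop :=
  ∃ p : H.visGraph.Walk s t, p.length = H.visGraph.dist s t ∧ w ∈ p.support

end DoubleHistogram

/-- A routing scheme for a graph `G`: every vertex carries a binary label and a binary
routing table, and the routing function maps (link table of the current vertex, routing
table of the current vertex, label of the target, current header) to the next vertex
together with the new header. -/
structure RoutingScheme {V : Type} (G : SimpleGraph V) where
  lab : V → List Bool
  tab : V → List Bool
  route : Set (List Bool) → List Bool → List Bool → List Bool → V × List Bool

namespace RoutingScheme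

variable {V : Type} {G : SimpleGraph V} (R : RoutingScheme G)

/-- One routing step at vertex `p` with header `h`, towards the target `t`: the routing
function is applied to the link table of `p` (the labels of its closed neighborhood),
the routing table of `p`, the label of `t` and the header `h`. -/
def step (t p : V) (h : List Bool) : V × List Bool :=
  R.route (R.lab '' {w | w = p ∨ G.Adj p w}) (R.tab p) (R.lab t) h

/-- The routing sequence from `s` towards `t`, starting with the empty header. -/
def seq (s t : V) : ℕ → V × List Bool := fun k =>
  Nat.rec (motive := fun _ => V × List Bool) (s, ([] : List Bool))
    (fun _ q => R.step t q.1 q.2) k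

end RoutingScheme

/-!
If `v = (xs (i+1), d i)` is `r`-reflex, every vertex `u ≠ v, r(v)` of `[v, r(v)]` lies strictly
below the horizontal segment from `v` to `r(v)`: the columns this segment sweeps are at least as
deep as `d i`, and general position makes the inequality strict (the vertex at the far end is
excluded since it is `r(v)`). So the leftward ray from `u` is blocked by column `i`, putting
`ℓ(u)` right of `v`, while the rightward ray from `u`, lifted to height `d i`, lies on the ray from
`v`, putting `r(u)` left of `r(v)`. For the left base vertex, `[v, r(v)]` is all of `V(P)`.
-/

namespace DoubleHistogram

variable (H : DoubleHistogram)

lemma isClosed_region : IsClosed H.region :=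
  (isClosed_iUnion_of_finite fun _ => isClosed_Icc.prod isClosed_Icc).union
    (isClosed_iUnion_of_finite fun _ => isClosed_Icc.prod isClosed_Icc)

lemma fst_mem_Icc_of_mem_region {p : ℝ × ℝ} (hp : p ∈ H.region) :
    p.1 ∈ Icc (H.xs 0) (H.xs (Fin.last H.m)) := by
  rcases hp with hp | hp <;> simp only [mem_iUnion, mem_prod, mem_Icc] at hp
  · obtain ⟨i, ⟨h1, h2⟩, -⟩ := hp
    exact ⟨(H.xs_mono.monotone (Fin.zero_le _)).trans h1,
      h2.trans (H.xs_mono.monotone (Fin.le_last _))⟩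
  · obtain ⟨j, ⟨h1, h2⟩, -⟩ := hp
    refine ⟨?_, ?_⟩
    · calc H.xs 0 = H.ys 0 := H.left_eq.symm
        _ ≤ H.ys j.castSucc := H.ys_mono.monotone (Fin.zero_le _)
        _ ≤ p.1 := h1
    · calc p.1 ≤ H.ys j.succ := h2
        _ ≤ H.ys (Fin.last H.n) := H.ys_mono.monotone (Fin.le_last _)
        _ = H.xs (Fin.last H.m) := H.right_eq

lemma verts_subset_region : H.verts ⊆ H.region := by
  intro w hw
  simp only [verts, mem_union, mem_iUnion, mem_insert_iff, mem_singleton_iff] at hw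
  rcases hw with ⟨c, rfl | rfl⟩ | ⟨c, rfl | rfl⟩
  · exact Or.inl (mem_iUnion.2 ⟨c, ⟨left_mem_Icc.2 (H.xs_mono c.castSucc_lt_succ).le,
      left_mem_Icc.2 (H.d_neg c).le⟩⟩)
  · exact Or.inl (mem_iUnion.2 ⟨c, ⟨right_mem_Icc.2 (H.xs_mono c.castSucc_lt_succ).le,
      left_mem_Icc.2 (H.d_neg c).le⟩⟩)
  · exact Or.inr (mem_iUnion.2 ⟨c, ⟨left_mem_Icc.2 (H.ys_mono c.castSucc_lt_succ).le,
      right_mem_Icc.2 (H.h_pos c).le⟩⟩)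
  · exact Or.inr (mem_iUnion.2 ⟨c, ⟨right_mem_Icc.2 (H.ys_mono c.castSucc_lt_succ).le,
      right_mem_Icc.2 (H.h_pos c).le⟩⟩)

lemma xs_succ_d_mem_region (i : Fin H.m) : (H.xs i.succ, H.d i) ∈ H.region :=
  H.verts_subset_region (Or.inl (mem_iUnion.2 ⟨i, Or.inr rfl⟩))

lemma d_le_of_mem_region {c : Fin H.m} {t y : ℝ} (h : (t, y) ∈ H.region) (hy : y < 0)
    (h1 : H.xs c.castSucc < t) (h2 : t < H.xs c.succ) : H.d c ≤ y := by
  rcases h with h | h <;> simp only [mem_iUnion, mem_prod, mem_Icc] at h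
  · obtain ⟨q, ⟨hq1, hq2⟩, hqy, -⟩ := h
    have l1 := H.xs_mono.lt_iff_lt.mp (hq1.trans_lt h2)
    have l2 := H.xs_mono.lt_iff_lt.mp (h1.trans_le hq2)
    rw [Fin.castSucc_lt_succ_iff] at l1 l2
    rwa [le_antisymm l1 l2] at hqy
  · obtain ⟨j, -, hj, -⟩ := h
    linarith

lemma mem_region_of_le {t y y' : ℝ} (h : (t, y) ∈ H.region) (h1 : y ≤ y') (h2 : y' ≤ 0) :
    (t, y') ∈ H.region := by
  rcases h with h | h <;> simp only [mem_iUnion, mem_prod, mem_Icc] at h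
  · obtain ⟨i, hx, hy, -⟩ := h
    exact Or.inl (mem_iUnion.2 ⟨i, hx, hy.trans h1, h2⟩)
  · obtain ⟨j, hx, hy, -⟩ := h
    exact Or.inr (mem_iUnion.2 ⟨j, hx, hy.trans h1, h2.trans (H.h_pos j).le⟩)

lemma Icc_self_prod_subset_region {p : ℝ × ℝ} (hp : p ∈ H.region) :
    Icc p.1 p.1 ×ˢ ({p.2} : Set ℝ) ⊆ H.region := by
  rwa [Icc_self, singleton_prod_singleton, singleton_subset_iff]

lemma bddAbove_rhit_set (v : ℝ × ℝ) :
    BddAbove {x | v.1 ≤ x ∧ Icc v.1 x ×ˢ ({v.2} : Set ℝ) ⊆ H.region} :=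
  ⟨H.xs (Fin.last H.m), fun _ hx =>
    (H.fst_mem_Icc_of_mem_region (hx.2 (mk_mem_prod (right_mem_Icc.2 hx.1) rfl))).2⟩

lemma le_rhit {v : ℝ × ℝ} {x : ℝ} (h1 : v.1 ≤ x)
    (h2 : Icc v.1 x ×ˢ ({v.2} : Set ℝ) ⊆ H.region) : x ≤ H.rhit v :=
  le_csSup (H.bddAbove_rhit_set v) ⟨h1, h2⟩

lemma rhit_le {v : ℝ × ℝ} (hv : v ∈ H.region) {b : ℝ}
    (hb : ∀ x, v.1 ≤ x → Icc v.1 x ×ˢ ({v.2} : Set ℝ) ⊆ H.region → x ≤ b) :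
    H.rhit v ≤ b :=
  csSup_le ⟨v.1, le_rfl, H.Icc_self_prod_subset_region hv⟩ fun x hx => hb x hx.1 hx.2

lemma le_lhit {v : ℝ × ℝ} (hv : v ∈ H.region) {b : ℝ}
    (hb : ∀ x, x ≤ v.1 → Icc x v.1 ×ˢ ({v.2} : Set ℝ) ⊆ H.region → b ≤ x) :
    b ≤ H.lhit v :=
  le_csInf ⟨v.1, le_rfl, H.Icc_self_prod_subset_region hv⟩ fun x hx => hb x hx.1 hx.2

lemma rhit_le_xs_last {v : ℝ × ℝ} (hv : v ∈ H.region) : H.rhit v ≤ H.xs (Fin.last H.m) :=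
  H.rhit_le hv fun _ hx hseg =>
    (H.fst_mem_Icc_of_mem_region (hseg (mk_mem_prod (right_mem_Icc.2 hx) rfl))).2

lemma xs_zero_le_lhit {v : ℝ × ℝ} (hv : v ∈ H.region) : H.xs 0 ≤ H.lhit v :=
  H.le_lhit hv fun _ hx hseg =>
    (H.fst_mem_Icc_of_mem_region (hseg (mk_mem_prod (left_mem_Icc.2 hx) rfl))).1

lemma mem_region_of_le_rhit {v : ℝ × ℝ} (hv : v ∈ H.region) {t : ℝ}
    (h1 : v.1 ≤ t) (h2 : t ≤ H.rhit v) : (t, v.2) ∈ H.region := by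
  have hne : {x | v.1 ≤ x ∧ Icc v.1 x ×ˢ ({v.2} : Set ℝ) ⊆ H.region}.Nonempty :=
    ⟨v.1, le_rfl, H.Icc_self_prod_subset_region hv⟩
  rcases h2.lt_or_eq with h2 | rfl
  · obtain ⟨x, hx, htx⟩ := exists_lt_of_lt_csSup hne h2
    exact hx.2 (mk_mem_prod ⟨h1, htx.le⟩ rfl)
  · -- the ray is closed, so it reaches its supremum
    have hclosed : IsClosed {s : ℝ | (s, v.2) ∈ H.region} :=
      H.isClosed_region.preimage (continuous_id.prodMk continuous_const)
    refine closure_minimal (fun x hx => ?_) hclosed (csSup_mem_closure hne (H.bddAbove_rhit_set v))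
    exact hx.2 (mk_mem_prod (right_mem_Icc.2 hx.1) rfl)

lemma rhit_le_rhit {u v : ℝ × ℝ} (hu : u ∈ H.region) (hv : v ∈ H.region)
    (h1 : v.1 ≤ u.1) (h2 : u.1 ≤ H.rhit v) (hy : u.2 ≤ v.2) (hv0 : v.2 ≤ 0) :
    H.rhit u ≤ H.rhit v := by
  refine H.rhit_le hu fun x hx hseg => H.le_rhit (h1.trans hx) ?_
  rintro ⟨a, b⟩ ⟨ha, rfl : b = v.2⟩
  rcases le_or_gt a u.1 with hau | hau
  · exact H.mem_region_of_le_rhit hv ha.1 (hau.trans h2)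
  · exact H.mem_region_of_le (hseg (mk_mem_prod ⟨hau.le, ha.2⟩ rfl)) hy hv0

lemma xs_succ_le_lhit {u : ℝ × ℝ} {c : Fin H.m} (hu : u ∈ H.region)
    (hc : H.xs c.succ ≤ u.1) (hy : u.2 < H.d c) : H.xs c.succ ≤ H.lhit u := by
  refine H.le_lhit hu fun x hx hseg => ?_
  by_contra! hxc
  obtain ⟨t, ht, ht2⟩ := exists_between (max_lt hxc (H.xs_mono c.castSucc_lt_succ))
  rw [max_lt_iff] at ht
  have hdc := H.d_le_of_mem_region (hseg (mk_mem_prod ⟨ht.1.le, ht2.le.trans hc⟩ rfl))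
    (hy.trans (H.d_neg c)) ht.2 ht2
  linarith

lemma d_le_of_lt_rhit {v : ℝ × ℝ} {p : Fin H.m} (hv : v ∈ H.region) (hv0 : v.2 < 0)
    (h1 : v.1 ≤ H.xs p.castSucc) (h2 : H.xs p.castSucc < H.rhit v) : H.d p ≤ v.2 := by
  obtain ⟨t, ht1, ht2⟩ := exists_between (lt_min (H.xs_mono p.castSucc_lt_succ) h2)
  exact H.d_le_of_mem_region (H.mem_region_of_le_rhit hv (h1.trans ht1.le)
    (ht2.le.trans (min_le_right _ _))) hv0 ht1 (ht2.trans_le (min_le_left _ _))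

lemma nearY_xs_succ {j k : Fin H.m} (hjk : j.succ = k.castSucc) {y : ℝ} (hy : y < 0) :
    H.nearY (H.xs j.succ) y = max (H.d j) (H.d k) := by
  have hcol : {y | y < 0 ∧ (H.xs j.succ, y) ∈ H.verts} = {H.d j, H.d k} := by
    ext z
    simp only [mem_ofPred_eq, mem_insert_iff, mem_singleton_iff]
    constructor
    · rintro ⟨hz, hv⟩
      simp only [verts, mem_union, mem_iUnion, mem_insert_iff, mem_singleton_iff,
        Prod.mk.injEq] at hv
      rcases hv with ⟨q, ⟨hq, rfl⟩ | ⟨hq, rfl⟩⟩ | ⟨q, ⟨-, rfl⟩ | ⟨-, rfl⟩⟩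
      · obtain rfl : q = k := by
          rw [← Fin.castSucc_inj, ← hjk]
          exact (H.xs_mono.injective hq).symm
        exact Or.inr rfl
      · obtain rfl : q = j := (Fin.succ_inj.1 (H.xs_mono.injective hq)).symm
        exact Or.inl rfl
      all_goals exact absurd (H.h_pos q) hz.not_gt
    · rintro (rfl | rfl)
      · exact ⟨H.d_neg j, Or.inl (mem_iUnion.2 ⟨j, Or.inr rfl⟩)⟩
      · exact ⟨H.d_neg k, Or.inl (mem_iUnion.2 ⟨k, Or.inl (by rw [hjk])⟩)⟩
  rw [nearY, if_pos hy, hcol, csSup_pair]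

lemma rptS_fst (v : ℝ × ℝ) : (H.rptS v).1 = H.rhit v := by
  unfold rptS baseR
  split_ifs with h
  · exact h.symm
  · rfl

lemma lptS_fst (v : ℝ × ℝ) : (H.lptS v).1 = H.lhit v := by
  unfold lptS baseL
  split_ifs with h
  · exact h.symm
  · rfl

lemma rptS_of_ne {v : ℝ × ℝ} (h : H.rhit v ≠ H.xs (Fin.last H.m)) :
    H.rptS v = (H.rhit v, H.nearY (H.rhit v) v.2) :=
  if_neg h

lemma ivl_subset_ivl {p q p' q' : ℝ × ℝ} (hp : p'.1 ≤ p.1) (hq : q.1 ≤ q'.1) :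
    H.ivl p q ⊆ H.ivl p' q' :=
  fun _ ⟨hu, h1, h2⟩ => ⟨hu, hp.trans h1, h2.trans hq⟩

lemma d_lt_of_xs_castSucc_eq_rhit {i p : Fin H.m} (hip : i.succ < p.castSucc)
    (hR : H.xs p.castSucc = H.rhit (H.xs i.succ, H.d i))
    (hu : (H.xs p.castSucc, H.d p) ≠ H.rptS (H.xs i.succ, H.d i)) : H.d p < H.d i := by
  rw [Fin.lt_def, Fin.val_succ, Fin.val_castSucc] at hip
  let p' : Fin H.m := ⟨p - 1, by omega⟩
  have hp' : p'.succ = p.castSucc :=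
    Fin.ext (by simp only [Fin.val_succ, Fin.val_castSucc, p']; omega)
  have hp'i : H.d p' < H.d i := by
    refine (H.d_le_of_lt_rhit (H.xs_succ_d_mem_region i) (H.d_neg i)
      (H.xs_mono.monotone ?_) ?_).lt_of_ne (H.d_inj.ne ?_)
    · simp only [Fin.le_def, Fin.val_succ, Fin.val_castSucc, p']
      omega
    · rw [← hR, ← hp']
      exact H.xs_mono p'.castSucc_lt_succ
    · exact Fin.ne_of_val_ne (by simp only [p']; omega)
  have hR_ne : H.rhit (H.xs i.succ, H.d i) ≠ H.xs (Fin.last H.m) := by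
    rw [← hR]
    exact H.xs_mono.injective.ne (Fin.castSucc_lt_last p).ne
  rw [H.rptS_of_ne hR_ne, ← hR, ← hp', H.nearY_xs_succ hp' (H.d_neg i)] at hu
  -- `r(v)` is the endpoint of the vertical edge at `xs p` closer to the base line; `u` is the other
  have hpp' : H.d p < H.d p' := lt_of_not_ge fun h => hu (by rw [max_eq_right h])
  exact hpp'.trans hp'i

lemma eq_zero_of_n_eq_one (hn : H.n = 1) (j : Fin H.n) : j = ⟨0, H.hn⟩ :=
  Fin.ext (by simp only; omega)

lemma ys_castSucc_of_n_eq_one (hn : H.n = 1) (j : Fin H.n) : H.ys j.castSucc = H.xs 0 := by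
  rw [← H.left_eq, H.eq_zero_of_n_eq_one hn j]
  rfl

lemma ys_succ_of_n_eq_one (hn : H.n = 1) (j : Fin H.n) :
    H.ys j.succ = H.xs (Fin.last H.m) := by
  rw [← H.right_eq]
  congr
  exact Fin.ext (by simp only [Fin.val_succ, Fin.val_last]; have := j.isLt; omega)

lemma mem_verts_of_n_eq_one (hn : H.n = 1) {u : ℝ × ℝ} (hu : u ∈ H.verts) :
    (∃ p : Fin H.m, u = (H.xs p.castSucc, H.d p)) ∨ (∃ p : Fin H.m, u = (H.xs p.succ, H.d p)) ∨
      u = H.baseL ∨ u = H.baseR := by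
  simp only [verts, mem_union, mem_iUnion, mem_insert_iff, mem_singleton_iff] at hu
  rcases hu with ⟨p, rfl | rfl⟩ | ⟨j, rfl | rfl⟩
  · exact Or.inl ⟨p, rfl⟩
  · exact Or.inr (Or.inl ⟨p, rfl⟩)
  · rw [baseL, H.ys_castSucc_of_n_eq_one hn, H.eq_zero_of_n_eq_one hn j]
    exact Or.inr (Or.inr (Or.inl rfl))
  · rw [baseR, H.ys_succ_of_n_eq_one hn, H.eq_zero_of_n_eq_one hn j]
    exact Or.inr (Or.inr (Or.inr rfl))

lemma base_edge_subset_region (hn : H.n = 1) :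
    Icc (H.xs 0) (H.xs (Fin.last H.m)) ×ˢ ({H.h ⟨0, H.hn⟩} : Set ℝ) ⊆ H.region := by
  rintro ⟨a, b⟩ ⟨ha, rfl : b = _⟩
  refine Or.inr (mem_iUnion.2 ⟨⟨0, H.hn⟩, mk_mem_prod ?_ (right_mem_Icc.2 (H.h_pos _).le)⟩)
  rwa [H.ys_castSucc_of_n_eq_one hn, H.ys_succ_of_n_eq_one hn]

lemma rhit_baseL (hn : H.n = 1) : H.rhit H.baseL = H.xs (Fin.last H.m) :=
  le_antisymm
    (H.rhit_le_xs_last (H.base_edge_subset_region hn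
      (mk_mem_prod (left_mem_Icc.2 (H.xs_mono.monotone (Fin.zero_le _))) rfl)))
    (H.le_rhit (H.xs_mono.monotone (Fin.zero_le _)) (H.base_edge_subset_region hn))

lemma snd_lt_d_of_mem_ivl_rptS (hn : H.n = 1) {i : Fin H.m} (hi : (i : ℕ) + 1 < H.m)
    (hdi : H.d ⟨i + 1, hi⟩ < H.d i) {u : ℝ × ℝ}
    (hu : u ∈ H.ivl (H.xs i.succ, H.d i) (H.rptS (H.xs i.succ, H.d i)))
    (huv : u ≠ (H.xs i.succ, H.d i)) (hur : u ≠ H.rptS (H.xs i.succ, H.d i)) :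
    u.2 < H.d i := by
  obtain ⟨huV, hvu, huR⟩ := hu
  rw [rptS_fst] at huR
  have hv := H.xs_succ_d_mem_region i
  rcases H.mem_verts_of_n_eq_one hn huV with ⟨p, rfl⟩ | ⟨p, rfl⟩ | rfl | rfl
  · rcases (H.xs_mono.le_iff_le.1 hvu).lt_or_eq with hip | hip
    · rcases huR.lt_or_eq with hpR | hpR
      · have hpi : p ≠ i := by rintro rfl; exact hip.not_ge Fin.castSucc_lt_succ.le
        exact (H.d_le_of_lt_rhit hv (H.d_neg i) hvu hpR).lt_of_ne (H.d_inj.ne hpi)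
      · exact H.d_lt_of_xs_castSucc_eq_rhit hip hpR hur
    · obtain rfl : p = ⟨i + 1, hi⟩ := Fin.ext (by rw [Fin.ext_iff] at hip; simpa using hip.symm)
      exact hdi
  · have hip : i < p := lt_of_le_of_ne (Fin.succ_le_succ_iff.1 (H.xs_mono.le_iff_le.1 hvu))
      fun h => huv (by rw [h])
    exact (H.d_le_of_lt_rhit hv (H.d_neg i)
      (H.xs_mono.monotone (Fin.succ_le_castSucc_iff.2 hip))
      ((H.xs_mono p.castSucc_lt_succ).trans_le huR)).lt_of_ne (H.d_inj.ne hip.ne')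
  · exact absurd hvu (H.xs_mono (Fin.succ_pos i)).not_ge
  · have hR : H.rhit (H.xs i.succ, H.d i) = H.xs (Fin.last H.m) :=
      le_antisymm (H.rhit_le_xs_last hv) huR
    exact absurd (if_pos hR).symm hur

end DoubleHistogram

theorem interval_inclusion_general
    (H : DoubleHistogram) (hSimple : H.n = 1)
    (v : ℝ × ℝ) (hvc : H.IsRReflex v ∨ v = H.baseL)
    (u : ℝ × ℝ) (hu : u ∈ H.ivl v (H.rptS v)) (huv : u ≠ v) (hur : u ≠ H.rptS v) :
    H.IvS u ⊆ H.ivl v (H.rptS v) := by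
  have hu_reg := H.verts_subset_region hu.1
  have hvu : v.1 ≤ u.1 := hu.2.1
  have huR : u.1 ≤ H.rhit v := H.rptS_fst v ▸ hu.2.2
  suffices h : v.1 ≤ H.lhit u ∧ H.rhit u ≤ H.rhit v from
    H.ivl_subset_ivl (by rw [H.lptS_fst]; exact h.1) (by rw [H.rptS_fst, H.rptS_fst]; exact h.2)
  rcases hvc with (⟨i, hi, rfl, hdi⟩ | ⟨j, hj, -⟩) | rfl
  · have hlt := H.snd_lt_d_of_mem_ivl_rptS hSimple hi hdi hu huv hur
    exact ⟨H.xs_succ_le_lhit hu_reg hvu hlt,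
      H.rhit_le_rhit hu_reg (H.xs_succ_d_mem_region i) hvu huR hlt.le (H.d_neg i).le⟩
  · omega
  · exact ⟨H.xs_zero_le_lhit hu_reg, H.rhit_baseL hSimple ▸ H.rhit_le_xs_last hu_reg⟩

/-- In a simple histogram, if `v` is `r`-reflex or the left base vertex
and `u ∈ [v, r(v)]` is distinct from `v` and `r(v)`, then `I(u) ⊆ [v, r(v)]`. -/
theorem interval_inclusion
    (H : DoubleHistogram) (hSimple : H.n = 1)
    (v : ℝ × ℝ) (hv : v ∈ H.verts) (hvc : H.IsRReflex v ∨ v = H.baseL)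
    (u : ℝ × ℝ) (hu : u ∈ H.ivl v (H.rptS v)) (huv : u ≠ v) (hur : u ≠ H.rptS v) :
    H.IvS u ⊆ H.ivl v (H.rptS v) :=
  interval_inclusion_general H hSimple v hvc u hu huv hur
end
end

section
/- Let P be a simple histogram and let v, w ∈ V(P) be co-visible vertices such that v is either r-reflex or the left base vertex, and w is either ℓ-reflex or the right base vertex. Let s and t be vertices with s ∈ [v, w] and t ∉ [v, w]. Then every path in the visibility graph G(P) from s to t includes v or w. -/
open Classical Set

noncomputable section

/-! A vertex `a ∈ [v, w]` that sees a vertex `b ∉ [v, w]` must be `v` or `w`; a walk leaving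
`[v, w]` has such an edge. If `a` is neither `v` nor `w`, it is a bottom vertex of a column
meeting the open strip between `v` and `w`, so, as `v` and `w` see each other, that column is
at least as deep as the columns of `v` and `w`. If, say, `b` lies left of `v`, the rectangle
of `a` and `b` crosses the column of `v`, which is thus at least as deep as the column of `a`.
Distinct depths force the two columns to coincide, but the column of `v` lies left of the
strip. -/

namespace DoubleHistogram

variable (H : DoubleHistogram)

lemma depth_le_of_mem_region {x y : ℝ} {k : Fin H.m} (hxy : (x, y) ∈ H.region) (hy : y < 0)
    (hkx : H.xs k.castSucc < x) (hxk : x < H.xs k.succ) : H.d k ≤ y := by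
  simp only [region, mem_union, mem_iUnion, mem_prod, mem_Icc] at hxy
  rcases hxy with ⟨j, ⟨hjx, hxj⟩, hjy, -⟩ | ⟨j, -, hy0, -⟩
  · obtain rfl : j = k := by
      by_contra hjk
      rcases lt_or_gt_of_ne hjk with hlt | hlt <;>
        linarith [H.xs_mono.monotone (Fin.succ_le_castSucc_iff.2 hlt)]
    exact hjy
  · linarith

lemma depth_le_of_covisible {p q : ℝ × ℝ} (hpq : H.covisible p q) (hx : p.1 < q.1)
    (hy : min p.2 q.2 < 0) {k : Fin H.m} (hkq : H.xs k.castSucc < q.1)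
    (hpk : p.1 < H.xs k.succ) : H.d k ≤ min p.2 q.2 := by
  have hk : H.xs k.castSucc < H.xs k.succ := H.xs_mono Fin.castSucc_lt_succ
  set l := max p.1 (H.xs k.castSucc)
  set r := min q.1 (H.xs k.succ)
  have hlr : l < r := max_lt (lt_min hx hpk) (lt_min hkq hk)
  refine H.depth_le_of_mem_region (x := (l + r) / 2) (hpq ⟨⟨?_, ?_⟩, ?_⟩) hy ?_ ?_
  · rw [min_eq_left hx.le]; linarith [le_max_left p.1 (H.xs k.castSucc)]
  · rw [max_eq_right hx.le]; linarith [min_le_left q.1 (H.xs k.succ)]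
  · exact ⟨le_rfl, min_le_max⟩
  · linarith [le_max_right p.1 (H.xs k.castSucc)]
  · linarith [min_le_right q.1 (H.xs k.succ)]

lemma xs_zero_le_fst {a : ℝ × ℝ} (ha : a ∈ H.verts) : H.xs 0 ≤ a.1 := by
  have hx (i : Fin (H.m + 1)) : H.xs 0 ≤ H.xs i := H.xs_mono.monotone (Fin.zero_le i)
  have hy (j : Fin (H.n + 1)) : H.xs 0 ≤ H.ys j :=
    H.left_eq ▸ H.ys_mono.monotone (Fin.zero_le j)
  simp only [verts, mem_union, mem_iUnion, mem_insert_iff, mem_singleton_iff] at ha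
  rcases ha with ⟨i, rfl | rfl⟩ | ⟨j, rfl | rfl⟩ <;> simp only [hx, hy]

lemma fst_le_xs_last {a : ℝ × ℝ} (ha : a ∈ H.verts) : a.1 ≤ H.xs (Fin.last H.m) := by
  have hx (i : Fin (H.m + 1)) : H.xs i ≤ H.xs (Fin.last H.m) := H.xs_mono.monotone i.le_last
  have hy (j : Fin (H.n + 1)) : H.ys j ≤ H.xs (Fin.last H.m) :=
    H.right_eq ▸ H.ys_mono.monotone j.le_last
  simp only [verts, mem_union, mem_iUnion, mem_insert_iff, mem_singleton_iff] at ha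
  rcases ha with ⟨i, rfl | rfl⟩ | ⟨j, rfl | rfl⟩ <;> simp only [hx, hy]

lemma mem_verts_cases (hS : H.n = 1) {a : ℝ × ℝ} (ha : a ∈ H.verts) :
    (∃ k : Fin H.m, a = (H.xs k.castSucc, H.d k)) ∨ (∃ k : Fin H.m, a = (H.xs k.succ, H.d k)) ∨
      a = H.baseL ∨ a = H.baseR := by
  simp only [verts, mem_union, mem_iUnion, mem_insert_iff, mem_singleton_iff] at ha
  rcases ha with ⟨k, rfl | rfl⟩ | ⟨j, rfl | rfl⟩
  · exact Or.inl ⟨k, rfl⟩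
  · exact Or.inr (Or.inl ⟨k, rfl⟩)
  all_goals
    obtain rfl : j = ⟨0, H.hn⟩ := Fin.ext (by omega)
  · refine Or.inr (Or.inr (Or.inl ?_))
    simp only [baseL, ← H.left_eq]
    rfl
  · refine Or.inr (Or.inr (Or.inr ?_))
    simp only [baseR, ← H.right_eq, Prod.mk.injEq, and_true]
    exact congrArg H.ys (Fin.ext (by simp [hS]))

def IsBottomRightVertOrBaseL (v : ℝ × ℝ) : Prop :=
  (∃ i : Fin H.m, v = (H.xs i.succ, H.d i)) ∨ v = H.baseL

def IsBottomLeftVertOrBaseR (w : ℝ × ℝ) : Prop :=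
  (∃ i : Fin H.m, w = (H.xs i.castSucc, H.d i)) ∨ w = H.baseR

variable {H}

lemma IsRReflex.exists_eq_bottomRight (hS : H.n = 1) {v : ℝ × ℝ} (h : H.IsRReflex v) :
    ∃ i : Fin H.m, v = (H.xs i.succ, H.d i) := by
  rcases h with ⟨i, -, hv, -⟩ | ⟨j, hj, -⟩
  · exact ⟨i, hv⟩
  · omega

lemma IsLReflex.exists_eq_bottomLeft (hS : H.n = 1) {w : ℝ × ℝ} (h : H.IsLReflex w) :
    ∃ i : Fin H.m, w = (H.xs i.castSucc, H.d i) := by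
  rcases h with ⟨i, -, hw, -⟩ | ⟨j, hj, -⟩
  · exact ⟨i, hw⟩
  · omega

namespace IsBottomRightVertOrBaseL

lemma eq_of_fst_eq {v : ℝ × ℝ} (hv : H.IsBottomRightVertOrBaseL v) {k : Fin H.m}
    (h : v.1 = H.xs k.succ) : v = (H.xs k.succ, H.d k) := by
  rcases hv with ⟨i, rfl⟩ | rfl
  · obtain rfl : i = k := Fin.succ_injective _ (H.xs_mono.injective h)
    rfl
  · exact absurd (H.xs_mono.injective h) (Fin.succ_ne_zero k).symm

lemma eq_baseL_of_fst_le {v : ℝ × ℝ} (hv : H.IsBottomRightVertOrBaseL v)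
    (h : v.1 ≤ H.xs 0) : v = H.baseL := by
  rcases hv with ⟨i, rfl⟩ | rfl
  · exact absurd h (not_le.2 (H.xs_mono (Fin.succ_pos i)))
  · rfl

end IsBottomRightVertOrBaseL

namespace IsBottomLeftVertOrBaseR

lemma eq_of_fst_eq {w : ℝ × ℝ} (hw : H.IsBottomLeftVertOrBaseR w) {k : Fin H.m}
    (h : w.1 = H.xs k.castSucc) : w = (H.xs k.castSucc, H.d k) := by
  rcases hw with ⟨i, rfl⟩ | rfl
  · obtain rfl : i = k := Fin.castSucc_injective _ (H.xs_mono.injective h)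
    rfl
  · exact absurd (H.xs_mono.injective h) (Fin.castSucc_lt_last k).ne'

lemma eq_baseR_of_le_fst {w : ℝ × ℝ} (hw : H.IsBottomLeftVertOrBaseR w)
    (h : H.xs (Fin.last H.m) ≤ w.1) : w = H.baseR := by
  rcases hw with ⟨i, rfl⟩ | rfl
  · exact absurd h (not_le.2 (H.xs_mono (Fin.castSucc_lt_last i)))
  · rfl

end IsBottomLeftVertOrBaseR

lemma not_covisible_of_lt_bottomRight {i k : Fin H.m} {w a b : ℝ × ℝ}
    (hco : H.covisible (H.xs i.succ, H.d i) w) (hvw : H.xs i.succ < w.1)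
    (hkw : H.xs k.castSucc < w.1) (hik : H.xs i.succ < H.xs k.succ)
    (ha : a.2 = H.d k) (hia : H.xs i.succ ≤ a.1) (hb : b.1 < H.xs i.succ) :
    ¬ H.covisible a b := by
  intro hab
  have hba : b.1 < a.1 := hb.trans_le hia
  have hdi_dk : H.d i ≤ H.d k :=
    calc H.d i ≤ min b.2 a.2 :=
          H.depth_le_of_covisible (H.covisible_symm hab) hba
            ((min_le_right _ _).trans_lt (ha ▸ H.d_neg k))
            ((H.xs_mono Fin.castSucc_lt_succ).trans_le hia) hb
      _ ≤ H.d k := ha ▸ min_le_right _ _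
  have hdk_di : H.d k ≤ H.d i :=
    calc H.d k ≤ min (H.d i) w.2 :=
          H.depth_le_of_covisible hco hvw ((min_le_left _ _).trans_lt (H.d_neg i)) hkw hik
      _ ≤ H.d i := min_le_left _ _
  obtain rfl : i = k := H.d_inj (le_antisymm hdi_dk hdk_di)
  exact lt_irrefl _ hik

lemma not_covisible_of_bottomLeft_lt {i k : Fin H.m} {v a b : ℝ × ℝ}
    (hco : H.covisible v (H.xs i.castSucc, H.d i)) (hvw : v.1 < H.xs i.castSucc)
    (hki : H.xs k.castSucc < H.xs i.castSucc) (hvk : v.1 < H.xs k.succ)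
    (ha : a.2 = H.d k) (hai : a.1 ≤ H.xs i.castSucc) (hb : H.xs i.castSucc < b.1) :
    ¬ H.covisible a b := by
  intro hab
  have hab' : a.1 < b.1 := hai.trans_lt hb
  have hdi_dk : H.d i ≤ H.d k :=
    calc H.d i ≤ min a.2 b.2 :=
          H.depth_le_of_covisible hab hab' ((min_le_left _ _).trans_lt (ha ▸ H.d_neg k))
            hb (hai.trans_lt (H.xs_mono Fin.castSucc_lt_succ))
      _ ≤ H.d k := ha ▸ min_le_left _ _
  have hdk_di : H.d k ≤ H.d i :=
    calc H.d k ≤ min v.2 (H.d i) :=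
          H.depth_le_of_covisible hco hvw ((min_le_right _ _).trans_lt (H.d_neg i)) hki hvk
      _ ≤ H.d i := min_le_right _ _
  obtain rfl : i = k := H.d_inj (le_antisymm hdi_dk hdk_di)
  exact lt_irrefl _ hki

lemma not_covisible_of_meets_strip {v w a b : ℝ × ℝ} {k : Fin H.m} (hco : H.covisible v w)
    (hv : H.IsBottomRightVertOrBaseL v) (hw : H.IsBottomLeftVertOrBaseR w) (hvw : v.1 < w.1)
    (hkw : H.xs k.castSucc < w.1) (hvk : v.1 < H.xs k.succ) (ha : a.2 = H.d k)
    (hva : v.1 ≤ a.1) (haw : a.1 ≤ w.1) (hb : b ∈ H.verts) (hbo : b ∉ H.ivl v w) :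
    ¬ H.covisible a b := by
  have hbo : b.1 < v.1 ∨ w.1 < b.1 := by
    by_contra! hbvw
    exact hbo ⟨hb, hbvw⟩
  rcases hbo with hbv | hwb
  · rcases hv with ⟨i, rfl⟩ | rfl
    · exact H.not_covisible_of_lt_bottomRight hco hvw hkw hvk ha hva hbv
    · exact absurd (H.xs_zero_le_fst hb) (not_le.2 hbv)
  · rcases hw with ⟨i, rfl⟩ | rfl
    · exact H.not_covisible_of_bottomLeft_lt hco hvw hkw hvk ha haw hwb
    · exact absurd (H.fst_le_xs_last hb) (not_le.2 hwb)

lemma eq_or_eq_of_covisible_of_not_mem_ivl (hS : H.n = 1) {v w a b : ℝ × ℝ}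
    (hco : H.covisible v w) (hv : H.IsBottomRightVertOrBaseL v)
    (hw : H.IsBottomLeftVertOrBaseR w) (ha : a ∈ H.ivl v w) (hb : b ∈ H.verts)
    (hbo : b ∉ H.ivl v w) (hab : H.covisible a b) : a = v ∨ a = w := by
  obtain ⟨haV, hva, haw⟩ := ha
  rcases H.mem_verts_cases hS haV with ⟨k, rfl⟩ | ⟨k, rfl⟩ | rfl | rfl
  · rcases haw.eq_or_lt with h | h
    · exact Or.inr (hw.eq_of_fst_eq h.symm).symm
    · have hk : H.xs k.castSucc < H.xs k.succ := H.xs_mono Fin.castSucc_lt_succ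
      exact absurd hab (H.not_covisible_of_meets_strip hco hv hw (hva.trans_lt h) h
        (hva.trans_lt hk) rfl hva haw hb hbo)
  · rcases hva.eq_or_lt with h | h
    · exact Or.inl (hv.eq_of_fst_eq h).symm
    · have hk : H.xs k.castSucc < H.xs k.succ := H.xs_mono Fin.castSucc_lt_succ
      exact absurd hab (H.not_covisible_of_meets_strip hco hv hw (h.trans_le haw)
        (hk.trans_le haw) h rfl hva haw hb hbo)
  · exact Or.inl (hv.eq_baseL_of_fst_le hva).symm
  · exact Or.inr (hw.eq_baseR_of_le_fst haw).symm

end DoubleHistogram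

theorem any_path_includes_interval_border_general
    (H : DoubleHistogram) (hSimple : H.n = 1)
    (v w : ℝ × ℝ) (hco : H.covisible v w)
    (hvc : H.IsRReflex v ∨ v = H.baseL) (hwc : H.IsLReflex w ∨ w = H.baseR)
    (s t : ↥H.verts) (hs : (s : ℝ × ℝ) ∈ H.ivl v w) (ht : (t : ℝ × ℝ) ∉ H.ivl v w)
    (p : H.visGraph.Walk s t) :
    (∃ z ∈ p.support, (z : ℝ × ℝ) = v) ∨ ∃ z ∈ p.support, (z : ℝ × ℝ) = w := by
  obtain ⟨e, he, hin, hout⟩ := p.exists_boundary_dart {u | (u : ℝ × ℝ) ∈ H.ivl v w} hs ht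
  have hv : H.IsBottomRightVertOrBaseL v := hvc.imp_left (·.exists_eq_bottomRight hSimple)
  have hw : H.IsBottomLeftVertOrBaseR w := hwc.imp_left (·.exists_eq_bottomLeft hSimple)
  have he_fst := p.dart_fst_mem_support_of_mem_darts he
  exact (H.eq_or_eq_of_covisible_of_not_mem_ivl hSimple hco hv hw hin e.snd.2 hout
    e.adj.2).imp (⟨e.fst, he_fst, ·⟩) (⟨e.fst, he_fst, ·⟩)

/-- In a simple histogram, let `v, w` be co-visible vertices with `v`
`r`-reflex or the left base vertex and `w` `ℓ`-reflex or the right base vertex; let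
`s ∈ [v, w]` and `t ∉ [v, w]`.  Then every path in `G(P)` from `s` to `t` includes `v`
or `w`. -/
theorem any_path_includes_interval_border
    (H : DoubleHistogram) (hSimple : H.n = 1)
    (v w : ℝ × ℝ) (hv : v ∈ H.verts) (hw : w ∈ H.verts)
    (hvw : v.1 ≤ w.1) (hco : H.covisible v w)
    (hvc : H.IsRReflex v ∨ v = H.baseL) (hwc : H.IsLReflex w ∨ w = H.baseR)
    (s t : ↥H.verts) (hs : (s : ℝ × ℝ) ∈ H.ivl v w) (ht : (t : ℝ × ℝ) ∉ H.ivl v w)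
    (p : H.visGraph.Walk s t) (hp : p.IsPath) :
    (∃ z ∈ p.support, (z : ℝ × ℝ) = v) ∨ ∃ z ∈ p.support, (z : ℝ × ℝ) = w :=
  any_path_includes_interval_border_general H hSimple v w hco hvc hwc s t hs ht p
end
end

section
/- Let P be a double histogram. Two vertices v, w ∈ V(P) are co-visible if and only if v ∈ I(w) and w ∈ I(v). -/
open Classical Set

noncomputable section

/-! The horizontal rays from a vertex are closed segments, since `P` is closed; so `w ∈ I(v)`
says exactly that the horizontal segment from `v` to the vertical line through `w` lies in `P`
(only the abscissae of `ℓ(v)` and `r(v)` enter `I(v)`). Co-visibility of `v` and `w` puts both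
horizontal sides of their rectangle in `P`. Conversely, every vertical section of a double
histogram is an interval, because each column is a segment touching the base line; hence the
two horizontal sides of the rectangle already force the whole rectangle into `P`. -/

section ClosedSegments

variable {α : Type*} [ConditionallyCompleteLinearOrder α] [TopologicalSpace α] [OrderTopology α]
  {S : Set α} {a x : α}

theorem Icc_subset_iff_csInf_le (hS : IsClosed S) (hB : BddBelow S) (ha : a ∈ S) :
    Icc x a ⊆ S ↔ sInf {y | y ≤ a ∧ Icc y a ⊆ S} ≤ x := by
  set T := {y | y ≤ a ∧ Icc y a ⊆ S}
  have hTS : T ⊆ S := fun y hy => hy.2 ⟨le_rfl, hy.1⟩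
  have haT : a ∈ T := ⟨le_rfl, by simpa using ha⟩
  have hTB : BddBelow T := hB.mono hTS
  constructor
  · intro h
    rcases le_total x a with hxa | hax
    · exact csInf_le hTB ⟨hxa, h⟩
    · exact (csInf_le hTB haT).trans hax
  · intro h
    have hinf : sInf T ∈ S := hS.closure_subset_iff.2 hTS (csInf_mem_closure ⟨a, haT⟩ hTB)
    refine (Icc_subset_Icc_left h).trans fun t ht => ?_
    rcases ht.1.eq_or_lt with heq | hlt
    · exact heq ▸ hinf
    · obtain ⟨y, hyT, hyt⟩ := exists_lt_of_csInf_lt ⟨a, haT⟩ hlt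
      exact hyT.2 ⟨hyt.le, ht.2⟩

theorem Icc_subset_iff_le_csSup (hS : IsClosed S) (hB : BddAbove S) (ha : a ∈ S) :
    Icc a x ⊆ S ↔ x ≤ sSup {y | a ≤ y ∧ Icc a y ⊆ S} := by
  set T := {y | a ≤ y ∧ Icc a y ⊆ S}
  have hTS : T ⊆ S := fun y hy => hy.2 ⟨hy.1, le_rfl⟩
  have haT : a ∈ T := ⟨le_rfl, by simpa using ha⟩
  have hTB : BddAbove T := hB.mono hTS
  constructor
  · intro h
    rcases le_total a x with hax | hxa
    · exact le_csSup hTB ⟨hax, h⟩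
    · exact hxa.trans (le_csSup hTB haT)
  · intro h
    have hsup : sSup T ∈ S := hS.closure_subset_iff.2 hTS (csSup_mem_closure ⟨a, haT⟩ hTB)
    refine (Icc_subset_Icc_right h).trans fun t ht => ?_
    rcases ht.2.eq_or_lt with heq | hlt
    · exact heq ▸ hsup
    · obtain ⟨y, hyT, hty⟩ := exists_lt_of_lt_csSup ⟨a, haT⟩ hlt
      exact hyT.2 ⟨ht.1, hty.le⟩

end ClosedSegments

namespace DoubleHistogram

variable (H : DoubleHistogram)

def row (y : ℝ) : Set ℝ := (·, y) ⁻¹' H.region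

lemma mem_region_iff {p : ℝ × ℝ} :
    p ∈ H.region ↔
      (∃ i : Fin H.m, p.1 ∈ Icc (H.xs i.castSucc) (H.xs i.succ) ∧ H.d i ≤ p.2 ∧ p.2 ≤ 0) ∨
      ∃ j : Fin H.n, p.1 ∈ Icc (H.ys j.castSucc) (H.ys j.succ) ∧ 0 ≤ p.2 ∧ p.2 ≤ H.h j := by
  simp only [region, mem_union, mem_iUnion, mem_prod, mem_Icc]

lemma isClosed_row (y : ℝ) : IsClosed (H.row y) :=
  H.isClosed_region.preimage (by fun_prop)

lemma row_subset_Icc (y : ℝ) : H.row y ⊆ Icc (H.xs 0) (H.xs (Fin.last H.m)) :=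
  fun _ hx => H.fst_mem_Icc_of_mem_region hx

lemma ordConnected_column (x : ℝ) : (Prod.mk x ⁻¹' H.region).OrdConnected := by
  refine ⟨fun y₁ h₁ y₂ h₂ y hy => ?_⟩
  simp only [mem_preimage, mem_region_iff] at h₁ h₂ ⊢
  rcases le_or_gt y 0 with hy0 | hy0
  · rcases h₁ with ⟨i, hx, hd, -⟩ | ⟨j, hx, h0, -⟩
    · exact Or.inl ⟨i, hx, hd.trans hy.1, hy0⟩
    · exact Or.inr ⟨j, hx, by linarith [hy.1], by linarith [hy.1, H.h_pos j]⟩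
  · rcases h₂ with ⟨i, -, -, h0⟩ | ⟨j, hx, -, hh⟩
    · linarith [hy.2]
    · exact Or.inr ⟨j, hx, hy0.le, hy.2.trans hh⟩

lemma lhit_eq (v : ℝ × ℝ) : H.lhit v = sInf {x | x ≤ v.1 ∧ Icc x v.1 ⊆ H.row v.2} := by
  simp only [lhit, row, prod_singleton, image_subset_iff]

lemma rhit_eq (v : ℝ × ℝ) : H.rhit v = sSup {x | v.1 ≤ x ∧ Icc v.1 x ⊆ H.row v.2} := by
  simp only [rhit, row, prod_singleton, image_subset_iff]

lemma uIcc_subset_row_iff {v : ℝ × ℝ} (hv : v ∈ H.region) (x : ℝ) :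
    uIcc v.1 x ⊆ H.row v.2 ↔ H.lhit v ≤ x ∧ x ≤ H.rhit v := by
  have hB := bddBelow_Icc.mono (H.row_subset_Icc v.2)
  have hA := bddAbove_Icc.mono (H.row_subset_Icc v.2)
  rw [uIcc_eq_union, union_subset_iff, H.lhit_eq, H.rhit_eq,
    Icc_subset_iff_le_csSup (H.isClosed_row _) hA hv,
    Icc_subset_iff_csInf_le (H.isClosed_row _) hB hv, and_comm]

lemma covisible_iff_uIcc_subset_row {p q : ℝ × ℝ} :
    H.covisible p q ↔ uIcc p.1 q.1 ⊆ H.row p.2 ∧ uIcc q.1 p.1 ⊆ H.row q.2 := by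
  rw [uIcc_comm q.1]
  constructor
  · intro h
    exact ⟨fun t ht => h ⟨ht, left_mem_uIcc⟩, fun t ht => h ⟨ht, right_mem_uIcc⟩⟩
  · rintro ⟨hp, hq⟩ ⟨t, y⟩ ⟨ht, hy⟩
    exact (H.ordConnected_column t).uIcc_subset (hp ht) (hq ht) hy

lemma lpt_fst (v : ℝ × ℝ) : (H.lpt v).1 = H.lhit v := by
  unfold lpt
  split_ifs with h
  exacts [h.symm, rfl]

lemma rpt_fst (v : ℝ × ℝ) : (H.rpt v).1 = H.rhit v := by
  unfold rpt
  split_ifs with h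
  exacts [h.symm, rfl]

lemma mem_Iv_iff {v w : ℝ × ℝ} : w ∈ H.Iv v ↔ w ∈ H.verts ∧ H.lhit v ≤ w.1 ∧ w.1 ≤ H.rhit v := by
  rw [Iv, ivl, lpt_fst, rpt_fst]
  rfl

end DoubleHistogram

/-- In a double histogram, two vertices `v, w` are co-visible if and only
if `v ∈ I(w)` and `w ∈ I(v)`. -/
theorem mutually_visible_iff
    (H : DoubleHistogram) (v w : ℝ × ℝ) (hv : v ∈ H.verts) (hw : w ∈ H.verts) :
    H.covisible v w ↔ v ∈ H.Iv w ∧ w ∈ H.Iv v := by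
  rw [H.covisible_iff_uIcc_subset_row, H.uIcc_subset_row_iff (H.verts_subset_region hv),
    H.uIcc_subset_row_iff (H.verts_subset_region hw), H.mem_Iv_iff, H.mem_Iv_iff]
  tauto
end
end
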